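/- (Explicit SVD of the diffusion matrix under Mixed boundary conditions.) Let n ≥ 1 and let S_d = S_d(n; 0, 1). Define U ∈ ℝ^{n×n} by U_{i,j} = √(2/(n+1/2))·cos(π(n−j+1/2)(2i−1)/(2n+1)); define V ∈ ℝ^{(n+1)×(n+1)} by V_{i,j} = −√(2/(n+1/2))·sin(2π(n−j+1/2)(i−1)/(2n+1)) for 1 ≤ j ≤ n, with column n+1 of V equal to the first standard basis vector e₁; and let Σ be the n × (n+1) matrix with Σ_{j,j} = 2 sin(π(n−j+1/2)/(2n+1)) for 1 ≤ j ≤ n and all other entries 0. Then U and V are orthogonal matrices and S_d = U Σ Vᵀ. In particular S_d has full row rank n. -/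

import Mathlib

/-!
The columns of `U` and `V` are cosine and sine modes with the odd frequencies `2(n - j) - 1`
over `2n + 1`. Product-to-sum formulas reduce their inner products to the sums
`∑ cos ((2i+1) r π / (2n+1))` and `∑ cos (2 i r π / (2n+1))`, which telescope after
multiplication by `sin (r π / (2n+1))`; this is nonzero as long as `2n + 1 ∤ r`.
The factorization is checked column by column: `S_d` takes differences of consecutive entries
(the boundary row is harmless because the sine columns vanish at index 0), so
`sin ((i+1)β) - sin (iβ) = 2 sin (β/2) cos ((2i+1)β/2)` gives `S_d V = U Σ` on the sine columns,
while the last column `e₁` of `V` spans the kernel of `S_d`. Hence `S_d = S_d V Vᵀ = U Σ Vᵀ`,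
and `S_d` has the rank of `Σ`.
-/

open Matrix Real
open scoped Matrix

noncomputable section

/-- The diffusion-only stoichiometry matrix `S_d(n; b₁, b₂)`. -/
def Sd (n : ℕ) (b₁ b₂ : ℝ) : Matrix (Fin n) (Fin (n+1)) ℝ :=
  Matrix.of fun i j =>
    if (j : ℕ) = (i : ℕ) ∧ (i : ℕ) = 0 then b₁
    else if (j : ℕ) = (i : ℕ) then 1
    else if (j : ℕ) = (i : ℕ) + 1 ∧ (i : ℕ) = n - 1 then -b₂
    else if (j : ℕ) = (i : ℕ) + 1 then (-1 : ℝ)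
    else 0

open Finset

theorem two_mul_sin_mul_sum_range_cos_add (x a : ℝ) (N : ℕ) :
    2 * sin x * ∑ i ∈ range N, cos (a + 2 * i * x) = sin (a + (2 * N - 1) * x) - sin (a - x) := by
  induction N with
  | zero => simp [sub_eq_add_neg]
  | succ N ih =>
    rw [sum_range_succ, mul_add, ih, two_mul_sin_mul_cos]
    push_cast
    rw [show x - (a + 2 * N * x) = -(a + (2 * N - 1) * x) by ring, sin_neg]
    ring_nf

theorem sin_int_mul_pi_div_ne_zero {N : ℕ} (hN : N ≠ 0) {r : ℤ} (hr : ¬ (N : ℤ) ∣ r) :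
    sin (r * π / N) ≠ 0 := by
  rw [Ne, sin_eq_zero_iff]
  rintro ⟨k, hk⟩
  refine hr ⟨k, ?_⟩
  have hNR : (N : ℝ) ≠ 0 := Nat.cast_ne_zero.mpr hN
  rw [eq_div_iff hNR, mul_right_comm, mul_left_inj' pi_ne_zero] at hk
  exact_mod_cast (hk.symm.trans (mul_comm _ _))

theorem Int.not_dvd_of_ne_zero_of_abs_lt {N r : ℤ} (h0 : r ≠ 0) (h : |r| < N) : ¬ N ∣ r :=
  fun hdvd => h0 (Int.eq_zero_of_abs_lt_dvd hdvd h)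

theorem neg_one_zpow_add_neg_one_zpow_of_odd {α : Type*} [DivisionRing α] {p q : ℤ}
    (h : Odd (p + q)) : (-1 : α) ^ p + (-1) ^ q = 0 := by
  obtain ⟨m, hm⟩ := h
  rcases Int.even_or_odd p with ⟨a, ha⟩ | ⟨a, ha⟩
  · rw [Even.neg_one_zpow ⟨a, ha⟩, Odd.neg_one_zpow ⟨m - a, by omega⟩, add_neg_cancel]
  · rw [Odd.neg_one_zpow ⟨a, ha⟩, Even.neg_one_zpow ⟨m - a, by omega⟩, neg_add_cancel]

theorem sum_range_cos_odd_mul (n : ℕ) {r : ℤ} (hr : ¬ (2 * n + 1 : ℤ) ∣ r) :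
    ∑ i ∈ range n, cos ((2 * i + 1) * (r * π / (2 * n + 1))) = -(-1) ^ r / 2 := by
  set x := r * π / (2 * n + 1)
  have hx : sin x ≠ 0 := by
    simpa using sin_int_mul_pi_div_ne_zero (N := 2 * n + 1) (by omega) (by exact_mod_cast hr)
  have hsum := two_mul_sin_mul_sum_range_cos_add x x n
  have h2n : x + (2 * n - 1) * x = r * π - x := by
    simp only [x]; field_simp; ring
  rw [h2n, sin_int_mul_pi_sub, sub_self, sin_zero, sub_zero] at hsum
  have hterm : ∀ i : ℕ, x + 2 * i * x = (2 * i + 1) * x := fun i => by ring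
  simp only [hterm] at hsum
  refine mul_left_cancel₀ hx ?_
  linear_combination hsum / 2

theorem sum_range_succ_cos_even_mul (n : ℕ) {r : ℤ} (hr : ¬ (2 * n + 1 : ℤ) ∣ r) :
    ∑ i ∈ range (n + 1), cos (2 * i * (r * π / (2 * n + 1))) = 1 / 2 := by
  set x := r * π / (2 * n + 1)
  have hx : sin x ≠ 0 := by
    simpa using sin_int_mul_pi_div_ne_zero (N := 2 * n + 1) (by omega) (by exact_mod_cast hr)
  have hsum := two_mul_sin_mul_sum_range_cos_add x 0 (n + 1)
  have h2n : 0 + (2 * ((n + 1 : ℕ) : ℝ) - 1) * x = r * π := by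
    simp only [x]; push_cast; field_simp; ring
  simp only [h2n, sin_int_mul_pi, zero_add, zero_sub, sin_neg] at hsum
  refine mul_left_cancel₀ hx ?_
  linear_combination hsum / 2

theorem sum_range_cos_mul_cos {n j k : ℕ} (hj : j < n) (hk : k < n) :
    ∑ i ∈ range n, cos (π * (n - j - 1/2) * (2 * i + 1) / (2 * n + 1)) *
      cos (π * (n - k - 1/2) * (2 * i + 1) / (2 * n + 1)) =
      if j = k then ((2 * n + 1) / 4 : ℝ) else 0 := by
  set d : ℤ := k - j
  set s : ℤ := 2 * n - 1 - j - k
  have hterm : ∀ i : ℕ, cos (π * (n - j - 1/2) * (2 * i + 1) / (2 * n + 1)) *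
      cos (π * (n - k - 1/2) * (2 * i + 1) / (2 * n + 1)) =
      (cos ((2 * i + 1) * (d * π / (2 * n + 1))) +
        cos ((2 * i + 1) * (s * π / (2 * n + 1)))) / 2 := fun i => by
    rw [eq_div_iff two_ne_zero, mul_comm, ← mul_assoc, two_mul_cos_mul_cos]
    congr 2 <;> (simp only [d, s]; push_cast; ring)
  have hs : ¬ (2 * n + 1 : ℤ) ∣ s :=
    Int.not_dvd_of_ne_zero_of_abs_lt (by omega) (abs_lt.mpr ⟨by omega, by omega⟩)
  rw [sum_congr rfl fun i _ => hterm i, ← sum_div, sum_add_distrib, sum_range_cos_odd_mul n hs]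
  split_ifs with hjk
  · subst hjk
    have hsodd : Odd s := ⟨n - 1 - j, by omega⟩
    simp only [d, sub_self, Int.cast_zero, zero_mul, zero_div, mul_zero, cos_zero, sum_const,
      card_range, nsmul_eq_mul, mul_one, hsodd.neg_one_zpow]
    ring
  · have hd : ¬ (2 * n + 1 : ℤ) ∣ d :=
      Int.not_dvd_of_ne_zero_of_abs_lt (by omega) (abs_lt.mpr ⟨by omega, by omega⟩)
    rw [sum_range_cos_odd_mul n hd]
    have := neg_one_zpow_add_neg_one_zpow_of_odd (α := ℝ) (p := d) (q := s) ⟨n - 1 - j, by omega⟩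
    linear_combination -this / 4

theorem sum_range_succ_sin_mul_sin {n j k : ℕ} (hj : j < n) (hk : k < n) :
    ∑ i ∈ range (n + 1), sin (2 * π * (n - j - 1/2) * i / (2 * n + 1)) *
      sin (2 * π * (n - k - 1/2) * i / (2 * n + 1)) =
      if j = k then ((2 * n + 1) / 4 : ℝ) else 0 := by
  set d : ℤ := k - j
  set s : ℤ := 2 * n - 1 - j - k
  have hterm : ∀ i : ℕ, sin (2 * π * (n - j - 1/2) * i / (2 * n + 1)) *
      sin (2 * π * (n - k - 1/2) * i / (2 * n + 1)) =
      (cos (2 * i * (d * π / (2 * n + 1))) - cos (2 * i * (s * π / (2 * n + 1)))) / 2 :=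
    fun i => by
      rw [eq_div_iff two_ne_zero, mul_comm, ← mul_assoc, two_mul_sin_mul_sin]
      congr 2 <;> (simp only [d, s]; push_cast; ring)
  have hs : ¬ (2 * n + 1 : ℤ) ∣ s :=
    Int.not_dvd_of_ne_zero_of_abs_lt (by omega) (abs_lt.mpr ⟨by omega, by omega⟩)
  rw [sum_congr rfl fun i _ => hterm i, ← sum_div, sum_sub_distrib,
    sum_range_succ_cos_even_mul n hs]
  split_ifs with hjk
  · subst hjk
    simp only [d, sub_self, Int.cast_zero, zero_mul, zero_div, mul_zero, cos_zero, sum_const,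
      card_range, nsmul_eq_mul, Nat.cast_add, Nat.cast_one, mul_one]
    ring
  · have hd : ¬ (2 * n + 1 : ℤ) ∣ d :=
      Int.not_dvd_of_ne_zero_of_abs_lt (by omega) (abs_lt.mpr ⟨by omega, by omega⟩)
    rw [sum_range_succ_cos_even_mul n hd]
    ring

theorem Sd_zero_one_mul_apply {n : ℕ} {m : Type*} (A : Matrix (Fin (n + 1)) m ℝ) (i : Fin n)
    (j : m) : (Sd n 0 1 * A) i j = (if (i : ℕ) = 0 then 0 else A i.castSucc j) - A i.succ j := by
  rw [mul_apply, Fintype.sum_eq_add i.castSucc i.succ Fin.castSucc_lt_succ.ne]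
  · split_ifs with hi <;> simp [Sd, hi, sub_eq_add_neg]
  · rintro l ⟨hl₁, hl₂⟩
    rw [Ne, Fin.ext_iff, Fin.val_castSucc] at hl₁
    rw [Ne, Fin.ext_iff, Fin.val_succ] at hl₂
    simp [Sd, hl₁, hl₂]

def mixedU (n : ℕ) : Matrix (Fin n) (Fin n) ℝ := Matrix.of fun i j =>
  Real.sqrt (2 / ((n : ℝ) + 1/2)) *
    Real.cos (π * ((n : ℝ) - (j : ℕ) - 1/2) * (2 * ((i : ℕ) : ℝ) + 1) / (2 * n + 1))

def mixedV (n : ℕ) : Matrix (Fin (n+1)) (Fin (n+1)) ℝ := Matrix.of fun i j =>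
  if (j : ℕ) = n then (if (i : ℕ) = 0 then 1 else 0)
  else -(Real.sqrt (2 / ((n : ℝ) + 1/2)) *
    Real.sin (2 * π * ((n : ℝ) - (j : ℕ) - 1/2) * ((i : ℕ) : ℝ) / (2 * n + 1)))

def mixedSigma (n : ℕ) : Matrix (Fin n) (Fin (n+1)) ℝ := Matrix.of fun i j =>
  if (i : ℕ) = (j : ℕ) then
    2 * Real.sin (π * ((n : ℝ) - (i : ℕ) - 1/2) / (2 * n + 1))
  else 0

theorem sqrt_two_div_mul_self (n : ℕ) :
    √(2 / ((n : ℝ) + 1/2)) * √(2 / ((n : ℝ) + 1/2)) = 4 / (2 * n + 1) := by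
  rw [mul_self_sqrt (by positivity)]
  field_simp
  ring

theorem mixedU_transpose_mul_self (n : ℕ) : (mixedU n)ᵀ * mixedU n = 1 := by
  ext j k
  calc ((mixedU n)ᵀ * mixedU n) j k
      = √(2 / ((n : ℝ) + 1/2)) * √(2 / ((n : ℝ) + 1/2)) *
          ∑ i ∈ range n, cos (π * (n - (j : ℕ) - 1/2) * (2 * i + 1) / (2 * n + 1)) *
            cos (π * (n - (k : ℕ) - 1/2) * (2 * i + 1) / (2 * n + 1)) := by
        rw [mul_apply, mul_sum, ← Fin.sum_univ_eq_sum_range]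
        refine sum_congr rfl fun i _ => ?_
        simp only [transpose_apply, mixedU, of_apply]
        ring
    _ = (1 : Matrix (Fin n) (Fin n) ℝ) j k := by
        simp only [sum_range_cos_mul_cos j.isLt k.isLt, one_apply, Fin.val_inj,
          sqrt_two_div_mul_self]
        split_ifs
        · field_simp
        · rw [mul_zero]

theorem mixedV_apply_last (n : ℕ) (i : Fin (n + 1)) :
    mixedV n i (Fin.last n) = if i = 0 then 1 else 0 := by
  simp only [mixedV, of_apply, Fin.val_last, if_true, Fin.val_eq_zero_iff]

theorem mixedV_apply_castSucc (n : ℕ) (i : Fin (n + 1)) (j : Fin n) :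
    mixedV n i j.castSucc = -(√(2 / ((n : ℝ) + 1/2)) *
      sin (2 * π * (n - (j : ℕ) - 1/2) * (i : ℕ) / (2 * n + 1))) := by
  simp [mixedV, j.isLt.ne]

theorem mixedV_transpose_mul_self (n : ℕ) : (mixedV n)ᵀ * mixedV n = 1 := by
  ext j k
  induction j using Fin.lastCases with
  | last =>
    induction k using Fin.lastCases with
    | last => simp [mul_apply, mixedV_apply_last]
    | cast k => simp [mul_apply, mixedV_apply_last, mixedV_apply_castSucc, one_apply_ne,
        (Fin.castSucc_lt_last k).ne']
  | cast j =>
    induction k using Fin.lastCases with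
    | last => simp [mul_apply, mixedV_apply_last, mixedV_apply_castSucc, one_apply_ne,
        (Fin.castSucc_lt_last j).ne]
    | cast k =>
      calc ((mixedV n)ᵀ * mixedV n) j.castSucc k.castSucc
          = √(2 / ((n : ℝ) + 1/2)) * √(2 / ((n : ℝ) + 1/2)) *
              ∑ i ∈ range (n + 1), sin (2 * π * (n - (j : ℕ) - 1/2) * i / (2 * n + 1)) *
                sin (2 * π * (n - (k : ℕ) - 1/2) * i / (2 * n + 1)) := by
            rw [mul_apply, mul_sum, ← Fin.sum_univ_eq_sum_range]
            refine sum_congr rfl fun i _ => ?_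
            simp only [transpose_apply, mixedV_apply_castSucc]
            ring
        _ = (1 : Matrix (Fin (n + 1)) (Fin (n + 1)) ℝ) j.castSucc k.castSucc := by
            simp only [sum_range_succ_sin_mul_sin j.isLt k.isLt, one_apply, Fin.castSucc_inj,
              Fin.val_inj, sqrt_two_div_mul_self]
            split_ifs
            · field_simp
            · rw [mul_zero]

theorem mixedSigma_apply_castSucc (n : ℕ) (i j : Fin n) :
    mixedSigma n i j.castSucc =
      if i = j then 2 * sin (π * (n - (i : ℕ) - 1/2) / (2 * n + 1)) else 0 := by
  simp [mixedSigma, Fin.val_inj]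

theorem mixedSigma_apply_last (n : ℕ) (i : Fin n) : mixedSigma n i (Fin.last n) = 0 := by
  simp [mixedSigma, i.isLt.ne]

theorem mixedU_mul_mixedSigma_apply_castSucc (n : ℕ) (i j : Fin n) :
    (mixedU n * mixedSigma n) i j.castSucc =
      mixedU n i j * (2 * sin (π * (n - (j : ℕ) - 1/2) / (2 * n + 1))) := by
  simp [mul_apply, mixedSigma_apply_castSucc]

theorem Sd_mul_mixedV (n : ℕ) : Sd n 0 1 * mixedV n = mixedU n * mixedSigma n := by
  ext i j
  induction j using Fin.lastCases with
  | last =>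
    rw [Sd_zero_one_mul_apply, mul_apply]
    simp [mixedV_apply_last, mixedSigma_apply_last, Fin.ext_iff]
  | cast k =>
    have hV₀ : mixedV n 0 k.castSucc = 0 := by simp [mixedV_apply_castSucc]
    calc (Sd n 0 1 * mixedV n) i k.castSucc
        = mixedV n i.castSucc k.castSucc - mixedV n i.succ k.castSucc := by
          rw [Sd_zero_one_mul_apply]
          split_ifs with hi
          · rw [show i.castSucc = 0 from Fin.ext hi, hV₀]
          · rfl
      _ = √(2 / ((n : ℝ) + 1/2)) * (sin (2 * π * (n - (k : ℕ) - 1/2) * ((i : ℕ) + 1) / (2 * n + 1))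
            - sin (2 * π * (n - (k : ℕ) - 1/2) * (i : ℕ) / (2 * n + 1))) := by
          simp only [mixedV_apply_castSucc, Fin.val_castSucc, Fin.val_succ]
          push_cast
          ring
      _ = (mixedU n * mixedSigma n) i k.castSucc := by
          rw [mixedU_mul_mixedSigma_apply_castSucc, sin_sub_sin]
          simp only [mixedU, of_apply]
          ring_nf

theorem sin_pi_mul_sub_div_pos {n j : ℕ} (hj : j < n) :
    0 < sin (π * (n - j - 1/2) / (2 * n + 1)) := by
  have hj' : (j : ℝ) + 1 ≤ n := by exact_mod_cast hj
  apply sin_pos_of_pos_of_lt_pi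
  · have : (0 : ℝ) < n - j - 1/2 := by linarith
    positivity
  · rw [div_lt_iff₀ (by positivity)]
    nlinarith [pi_pos, (Nat.cast_nonneg j : (0 : ℝ) ≤ j)]

theorem mixedSigma_mul_transpose (n : ℕ) :
    mixedSigma n * (mixedSigma n)ᵀ =
      diagonal fun i : Fin n => (2 * sin (π * (n - (i : ℕ) - 1/2) / (2 * n + 1))) ^ 2 := by
  ext i j
  rw [mul_apply, Fin.sum_univ_castSucc, mixedSigma_apply_last, zero_mul, add_zero]
  simp only [transpose_apply, mixedSigma_apply_castSucc, diagonal_apply, mul_ite, ite_mul,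
    mul_zero, zero_mul, sum_ite_eq, mem_univ, if_true, sq]
  split_ifs with h <;> simp only [h]

theorem rank_mixedSigma (n : ℕ) : (mixedSigma n).rank = n := by
  rw [← rank_self_mul_transpose, mixedSigma_mul_transpose, rank_of_isUnit, Fintype.card_fin]
  rw [isUnit_diagonal, Pi.isUnit_iff]
  exact fun i => (pow_pos (mul_pos two_pos (sin_pi_mul_sub_div_pos i.isLt)) 2).ne'.isUnit

/-- Indices run from 0, whereas in the informal statement they run from 1. -/
theorem stmt12_general (n : ℕ) :
    let U : Matrix (Fin n) (Fin n) ℝ := Matrix.of fun i j =>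
      Real.sqrt (2 / ((n : ℝ) + 1/2)) *
        Real.cos (π * ((n : ℝ) - (j : ℕ) - 1/2) * (2 * ((i : ℕ) : ℝ) + 1) / (2 * n + 1))
    let V : Matrix (Fin (n+1)) (Fin (n+1)) ℝ := Matrix.of fun i j =>
      if (j : ℕ) = n then (if (i : ℕ) = 0 then 1 else 0)
      else -(Real.sqrt (2 / ((n : ℝ) + 1/2)) *
        Real.sin (2 * π * ((n : ℝ) - (j : ℕ) - 1/2) * ((i : ℕ) : ℝ) / (2 * n + 1)))
    let Sig : Matrix (Fin n) (Fin (n+1)) ℝ := Matrix.of fun i j =>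
      if (i : ℕ) = (j : ℕ) then
        2 * Real.sin (π * ((n : ℝ) - (i : ℕ) - 1/2) / (2 * n + 1))
      else 0
    Uᵀ * U = 1 ∧ U * Uᵀ = 1 ∧ Vᵀ * V = 1 ∧ V * Vᵀ = 1 ∧
      Sd n 0 1 = U * Sig * Vᵀ ∧ (Sd n 0 1).rank = n := by
  intro U V Sig
  have hUtU : Uᵀ * U = 1 := mixedU_transpose_mul_self n
  have hVtV : Vᵀ * V = 1 := mixedV_transpose_mul_self n
  have hVVt : V * Vᵀ = 1 := mul_eq_one_comm.mp hVtV
  have hSdV : Sd n 0 1 * V = U * Sig := Sd_mul_mixedV n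
  refine ⟨hUtU, mul_eq_one_comm.mp hUtU, hVtV, hVVt, ?_, ?_⟩
  · rw [← hSdV, Matrix.mul_assoc, hVVt, Matrix.mul_one]
  · rw [← rank_mul_eq_left_of_isUnit_det V _ (isUnit_det_of_left_inverse hVtV), hSdV,
      rank_mul_eq_right_of_isUnit_det U _ (isUnit_det_of_left_inverse hUtU)]
    exact rank_mixedSigma n

/-- explicit SVD of the diffusion matrix under Mixed boundary conditions.
Indices here run from 0, whereas in the informal statement they run from 1. -/
theorem stmt12 (n : ℕ) (hn : 1 ≤ n) :
    let U : Matrix (Fin n) (Fin n) ℝ := Matrix.of fun i j =>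
      Real.sqrt (2 / ((n : ℝ) + 1/2)) *
        Real.cos (π * ((n : ℝ) - (j : ℕ) - 1/2) * (2 * ((i : ℕ) : ℝ) + 1) / (2 * n + 1))
    let V : Matrix (Fin (n+1)) (Fin (n+1)) ℝ := Matrix.of fun i j =>
      if (j : ℕ) = n then (if (i : ℕ) = 0 then 1 else 0)
      else -(Real.sqrt (2 / ((n : ℝ) + 1/2)) *
        Real.sin (2 * π * ((n : ℝ) - (j : ℕ) - 1/2) * ((i : ℕ) : ℝ) / (2 * n + 1)))
    let Sig : Matrix (Fin n) (Fin (n+1)) ℝ := Matrix.of fun i j =>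
      if (i : ℕ) = (j : ℕ) then
        2 * Real.sin (π * ((n : ℝ) - (i : ℕ) - 1/2) / (2 * n + 1))
      else 0
    Uᵀ * U = 1 ∧ U * Uᵀ = 1 ∧ Vᵀ * V = 1 ∧ V * Vᵀ = 1 ∧
      Sd n 0 1 = U * Sig * Vᵀ ∧ (Sd n 0 1).rank = n :=
  stmt12_general n
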